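/- arXiv:1008.0025 — 3 statements merged into one kernel-verified Lean document; each statement's English description precedes it below -/
import Mathlib

section
/- Let A and B be nonsingular n×n matrices over the extended tropical semifield D(ℝ). Then the product AB does not lie in M_n(G₀); that is, at least one entry of AB is not in the ghost ideal G₀. -/
noncomputable section

/-- The extended tropical semifield `D(ℝ)`: `bot` is `-∞`; `nb g r` is the element of
underlying value `r : ℝ`, ghost if `g = true`, tangible if `g = false`. -/
inductive DR : Type where
  | bot : DR
  | nb : Bool → ℝ → DR

namespace DR

/-- Supertropical addition on `D(ℝ)`. -/
def add : DR → DR → DR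
  | bot, y => y
  | x, bot => x
  | nb b r, nb c s => if r < s then nb c s else if s < r then nb b r else nb true r

/-- Supertropical multiplication on `D(ℝ)`. -/
def mul : DR → DR → DR
  | bot, _ => bot
  | _, bot => bot
  | nb b r, nb c s => nb (b || c) (r + s)

theorem bot_add (x : DR) : add bot x = x := by cases x <;> rfl

theorem add_bot (x : DR) : add x bot = x := by cases x <;> rfl

theorem bot_mul (x : DR) : mul bot x = bot := by cases x <;> rfl

theorem mul_bot (x : DR) : mul x bot = bot := by cases x <;> rfl

theorem add_comm' (x y : DR) : add x y = add y x := by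
  cases x <;> cases y <;> (try rfl)
  simp only [add]
  split_ifs <;>
    first
      | rfl
      | (exfalso; linarith)
      | (congr 1 <;> first | rfl | linarith)

theorem add_assoc' (x y z : DR) : add (add x y) z = add x (add y z) := by
  cases x with
  | bot => rw [bot_add, bot_add]
  | nb b r =>
    cases y with
    | bot => rw [add_bot, bot_add]
    | nb c s =>
      cases z with
      | bot => rw [add_bot, add_bot]
      | nb d t =>
        simp only [add]
        split_ifs <;>
          simp only [add] <;>
          (try split_ifs) <;>
          first
            | rfl
            | (exfalso; linarith)
            | (congr 1 <;> first | rfl | linarith)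

theorem mul_comm' (x y : DR) : mul x y = mul y x := by
  cases x <;> cases y <;> (try rfl)
  simp [mul, Bool.or_comm, add_comm]

theorem mul_assoc' (x y z : DR) : mul (mul x y) z = mul x (mul y z) := by
  cases x <;> cases y <;> cases z <;> (try rfl) <;>
    simp [mul, Bool.or_assoc, add_assoc]

theorem one_mul' (x : DR) : mul (nb false 0) x = x := by
  cases x <;> simp [mul]

theorem left_distrib' (x y z : DR) : mul x (add y z) = add (mul x y) (mul x z) := by
  cases x with
  | bot => simp [bot_mul, bot_add]
  | nb b r =>
    cases y with
    | bot => simp [bot_add, mul_bot]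
    | nb c s =>
      cases z with
      | bot => simp [add_bot, mul_bot]
      | nb d t =>
        simp only [mul, add]
        split_ifs <;>
          simp only [mul, add, Bool.or_true, Bool.true_or] <;>
          (try split_ifs) <;>
          first
            | rfl
            | (exfalso; linarith)
            | (congr 1 <;> first | rfl | linarith)

theorem right_distrib' (x y z : DR) : mul (add x y) z = add (mul x z) (mul y z) := by
  rw [mul_comm' (add x y) z, left_distrib', mul_comm' z x, mul_comm' z y]

instance : Add DR := ⟨add⟩
instance : Zero DR := ⟨bot⟩
instance : Mul DR := ⟨mul⟩
instance : One DR := ⟨nb false 0⟩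

instance : AddCommMonoid DR where
  add := add
  add_assoc := add_assoc'
  zero := bot
  zero_add := bot_add
  add_zero := add_bot
  add_comm := add_comm'
  nsmul := nsmulRec

instance : CommMonoid DR where
  mul := mul
  mul_assoc := mul_assoc'
  one := nb false 0
  one_mul := one_mul'
  mul_one := fun x => by show mul x (nb false 0) = x; rw [mul_comm']; exact one_mul' x
  mul_comm := mul_comm'
  npow := npowRec

instance : CommSemiring DR where
  __ := (inferInstance : AddCommMonoid DR)
  __ := (inferInstance : CommMonoid DR)
  left_distrib := left_distrib'
  right_distrib := right_distrib'
  zero_mul := bot_mul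
  mul_zero := mul_bot

/-- The ghost ideal `G₀ = ℝ^ν ∪ {-∞}` as a predicate. -/
def IsGhost : DR → Prop
  | bot => True
  | nb b _ => b = true

/-- The tangible elements `T = ℝ` as a predicate. -/
def Tangible : DR → Prop
  | nb false _ => True
  | _ => False

/-- Membership in `T ∪ {-∞}`. -/
def TangibleOrBot (x : DR) : Prop := x = bot ∨ Tangible x

/-- The underlying value in `ℝ ∪ {-∞}`. -/
def val : DR → WithBot ℝ
  | bot => ⊥
  | nb _ r => (r : WithBot ℝ)

/-- `x ≤_ν y` : comparison of underlying values, `-∞` smallest. -/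
def nuLe (x y : DR) : Prop := val x ≤ val y

/-- `x <_ν y` : strict comparison of underlying values, `-∞` smallest. -/
def nuLt (x y : DR) : Prop := val x < val y

/-- The tangible lift `x̂` of `x` (with `hat bot = bot`). -/
def hat : DR → DR
  | bot => bot
  | nb _ r => nb false r

/-- The ghost map `ν`. -/
def nu : DR → DR
  | bot => bot
  | nb _ r => nb true r

/-- The ghost-surpass relation `x ⊨ y` on `D(ℝ)`. -/
def GhostSurp (x y : DR) : Prop := ∃ c : DR, IsGhost c ∧ x = y + c

end DR

open DR

/-- A vector in `D(ℝ)^(n)` lies in the ghost submodule `G₀^(n)`. -/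
def GhostVec {n : ℕ} (v : Fin n → DR) : Prop := ∀ j, IsGhost (v j)

/-- A tangible vector: all entries in `T ∪ {-∞}`. -/
def TangibleVec {n : ℕ} (v : Fin n → DR) : Prop := ∀ j, TangibleOrBot (v j)

/-- The ghost-surpass relation `v ⊨ w` on vectors. -/
def GhostSurpVec {n : ℕ} (v w : Fin n → DR) : Prop :=
  ∃ u : Fin n → DR, GhostVec u ∧ v = w + u

/-- A family of vectors is tropically dependent. -/
def TropDep {ι : Type*} [Fintype ι] {n : ℕ} (w : ι → Fin n → DR) : Prop :=
  ∃ I : Finset ι, I.Nonempty ∧ ∃ α : ι → DR, (∀ i ∈ I, Tangible (α i)) ∧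
    ∀ j : Fin n, IsGhost (∑ i ∈ I, α i * w i j)

/-- A family of vectors is tropically independent. -/
def TropIndep {ι : Type*} [Fintype ι] {n : ℕ} (w : ι → Fin n → DR) : Prop := ¬ TropDep w

/-- A set of vectors is tropically dependent. -/
def SetTropDep {n : ℕ} (S : Set (Fin n → DR)) : Prop :=
  ∃ I : Finset (Fin n → DR), ↑I ⊆ S ∧ I.Nonempty ∧
    ∃ α : (Fin n → DR) → DR, (∀ w ∈ I, Tangible (α w)) ∧
      ∀ j : Fin n, IsGhost (∑ w ∈ I, α w * w j)

/-- A set of vectors is tropically independent. -/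
def SetTropIndep {n : ℕ} (S : Set (Fin n → DR)) : Prop := ¬ SetTropDep S

/-- A d-base of `V`: a maximal tropically independent subset of `V`. -/
def IsDBase {n : ℕ} (V S : Set (Fin n → DR)) : Prop :=
  S ⊆ V ∧ SetTropIndep S ∧ ∀ S', S ⊆ S' → S' ⊆ V → SetTropIndep S' → S' = S

/-- The rank of `V`: the maximal number of elements of a d-base of `V`. -/
noncomputable def trank {n : ℕ} (V : Set (Fin n → DR)) : ℕ :=
  sSup {m | ∃ S, IsDBase V S ∧ S.Finite ∧ S.ncard = m}

/-- `v` is tropically spanned by `S`. -/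
def SpannedBy {n : ℕ} (S : Set (Fin n → DR)) (v : Fin n → DR) : Prop :=
  ∃ I : Finset (Fin n → DR), ↑I ⊆ S ∧ I.Nonempty ∧
    ∃ α : (Fin n → DR) → DR, (∀ w ∈ I, Tangible (α w)) ∧
      GhostSurpVec v (fun j => ∑ w ∈ I, α w * w j)

/-- The tropical determinant (permanent) of a square matrix over `D(ℝ)`. -/
noncomputable def tperm {k : ℕ} (A : Matrix (Fin k) (Fin k) DR) : DR :=
  ∑ π : Equiv.Perm (Fin k), ∏ i, A (π i) i

/-! A tangible permanent has a strictly dominant tangible permutation, and after permuting rows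
and columns both `A` and `B` may be assumed dominated by their diagonals. If every diagonal entry
`∑ k, A j k * B k j` of `A * B` were ghost, its tangible term `k = j` would be matched in value by
a term `k = f j ≠ j`. Following a cycle `π` of `f` gives
`|A j j| + |B j j| ≤ |A j (π j)| + |B (π j) j|` for every `j`, so the permutations `π⁻¹` of `A`
and `π` of `B` together weigh at least as much as the two diagonals, contradicting strict
dominance. -/

namespace Function

theorem periodicPts_nonempty {α : Type*} [Finite α] [Nonempty α] (f : α → α) :
    (periodicPts f).Nonempty := by
  obtain ⟨x⟩ := ‹Nonempty α›
  obtain ⟨m, n, heq, hne⟩ : ∃ m n, f^[m] x = f^[n] x ∧ m ≠ n := by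
    simpa [Injective] using not_injective_infinite_finite (f^[·] x)
  wlog hmn : m < n generalizing m n
  · exact this n m heq.symm hne.symm (by omega)
  refine ⟨f^[m] x, mk_mem_periodicPts (n := n - m) (by omega) ?_⟩
  rw [IsPeriodicPt, IsFixedPt, ← iterate_add_apply, Nat.sub_add_cancel hmn.le, heq]

theorem exists_perm_ne_one_of_forall_not_isFixedPt {α : Type*} [Finite α] [Nonempty α]
    {f : α → α} (hf : ∀ x, ¬ IsFixedPt f x) :
    ∃ π : Equiv.Perm α, π ≠ 1 ∧ ∀ x, π x = x ∨ π x = f x := by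
  classical
  let π := Equiv.Perm.ofSubtype ((bijOn_periodicPts f).equiv f)
  have hπ : ∀ x, x ∈ periodicPts f → π x = f x := fun x hx =>
    Equiv.Perm.ofSubtype_apply_of_mem _ hx
  obtain ⟨x, hx⟩ := periodicPts_nonempty f
  refine ⟨π, fun h => hf x ?_, fun y => ?_⟩
  · rw [IsFixedPt, ← hπ x hx, h, Equiv.Perm.one_apply]
  · by_cases hy : y ∈ periodicPts f
    · exact .inr (hπ y hy)
    · exact .inl (Equiv.Perm.ofSubtype_apply_of_not_mem _ hy)

end Function

namespace DR

theorem isGhost_iff_not_tangible {x : DR} : IsGhost x ↔ ¬ Tangible x := by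
  rcases x with _ | ⟨_ | _, r⟩ <;> simp [IsGhost, Tangible]

theorem val_add (x y : DR) : val (x + y) = max (val x) (val y) := by
  change val (add x y) = _
  rcases x with _ | ⟨b, r⟩ <;> rcases y with _ | ⟨c, s⟩
  case nb.nb =>
    simp only [add]
    split_ifs with h₁ h₂ <;> simp only [val]
    · exact (max_eq_right (by exact_mod_cast h₁.le)).symm
    · exact (max_eq_left (by exact_mod_cast h₂.le)).symm
    · simp [le_antisymm (not_lt.mp h₂) (not_lt.mp h₁)]
  all_goals simp [add, val]

theorem val_mul (x y : DR) : val (x * y) = val x + val y := by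
  change val (mul x y) = _
  rcases x with _ | ⟨b, r⟩ <;> rcases y with _ | ⟨c, s⟩ <;> simp [mul, val]

variable {ι : Type*}

theorem val_sum (s : Finset ι) (f : ι → DR) :
    val (∑ i ∈ s, f i) = s.sup fun i => val (f i) := by
  classical
  induction s using Finset.cons_induction with
  | empty => rfl
  | cons a s ha ih => rw [Finset.sum_cons, Finset.sup_cons, val_add, ih]

theorem val_prod (s : Finset ι) (f : ι → DR) :
    val (∏ i ∈ s, f i) = ∑ i ∈ s, val (f i) := by
  classical
  induction s using Finset.cons_induction with
  | empty => rfl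
  | cons a s ha ih => rw [Finset.prod_cons, Finset.sum_cons, val_mul, ih]

theorem val_mul_lt_val_mul {x y x' y' : DR} (hx : val x < val x') (hy : val y < val y') :
    val (x * y) < val (x' * y') := by
  rw [val_mul, val_mul]
  calc val x + val y ≤ val x + val y' := by gcongr
    _ < val x' + val y' := WithBot.add_lt_add_right (ne_bot_of_gt hy) hx

theorem bot_lt_val_of_tangible {x : DR} (hx : Tangible x) : ⊥ < val x := by
  rcases x with _ | ⟨_ | _, r⟩ <;> simp_all [Tangible, val]

theorem add_eq_left_of_val_lt {x y : DR} (h : val y < val x) : x + y = x := by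
  change add x y = x
  rcases x with _ | ⟨b, r⟩ <;> rcases y with _ | ⟨c, s⟩
  · exact absurd h (lt_irrefl _)
  · exact absurd h not_lt_bot
  · rfl
  · have hsr : s < r := by simpa [val] using h
    simp [add, hsr, not_lt.mpr hsr.le]

theorem tangible_add_iff {x y : DR} :
    Tangible (x + y) ↔ (Tangible x ∧ val y < val x) ∨ (Tangible y ∧ val x < val y) := by
  refine ⟨fun h => ?_, ?_⟩
  · change Tangible (add x y) at h
    rcases x with _ | ⟨b, r⟩ <;> rcases y with _ | ⟨c, s⟩
    · exact absurd h id
    · exact .inr ⟨h, bot_lt_val_of_tangible h⟩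
    · exact .inl ⟨h, bot_lt_val_of_tangible h⟩
    · simp only [add] at h
      split_ifs at h with h₁ h₂
      · exact .inr ⟨h, by simpa [val] using h₁⟩
      · exact .inl ⟨h, by simpa [val] using h₂⟩
      · exact absurd h id
  · rintro (⟨hx, h⟩ | ⟨hy, h⟩)
    · rwa [add_eq_left_of_val_lt h]
    · rwa [add_comm, add_eq_left_of_val_lt h]

theorem tangible_mul_iff {x y : DR} : Tangible (x * y) ↔ Tangible x ∧ Tangible y := by
  change Tangible (mul x y) ↔ _
  rcases x with _ | ⟨_ | _, r⟩ <;> rcases y with _ | ⟨_ | _, s⟩ <;> simp [mul, Tangible]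

variable {s : Finset ι} {f : ι → DR} {i : ι}

theorem tangible_prod_iff :
    Tangible (∏ i ∈ s, f i) ↔ ∀ i ∈ s, Tangible (f i) := by
  classical
  induction s using Finset.cons_induction with
  | empty => exact iff_of_true trivial (by simp)
  | cons a s ha ih => rw [Finset.prod_cons, tangible_mul_iff, ih, Finset.forall_mem_cons]

theorem sum_eq_of_tangible_of_val_lt [DecidableEq ι] (hi : i ∈ s) (ht : Tangible (f i))
    (hdom : ∀ j ∈ s, j ≠ i → val (f j) < val (f i)) : ∑ j ∈ s, f j = f i := by
  rw [← Finset.add_sum_erase _ _ hi, add_eq_left_of_val_lt]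
  rw [val_sum, Finset.sup_lt_iff (bot_lt_val_of_tangible ht)]
  exact fun j hj => hdom j (Finset.mem_of_mem_erase hj) (Finset.ne_of_mem_erase hj)

theorem tangible_sum_iff :
    Tangible (∑ i ∈ s, f i) ↔ ∃ i ∈ s, Tangible (f i) ∧ ∀ j ∈ s, j ≠ i → val (f j) < val (f i) := by
  classical
  refine ⟨fun h => ?_, fun ⟨i, hi, ht, hdom⟩ => sum_eq_of_tangible_of_val_lt hi ht hdom ▸ ht⟩
  induction s using Finset.cons_induction with
  | empty => exact absurd h id
  | cons a s ha ih =>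
    rw [Finset.sum_cons] at h
    rcases tangible_add_iff.mp h with ⟨hta, hlt⟩ | ⟨hts, hlt⟩
    · refine ⟨a, Finset.mem_cons_self a s, hta, fun j hj hja => ?_⟩
      have hjs : j ∈ s := (Finset.mem_cons.mp hj).resolve_left hja
      exact lt_of_le_of_lt (val_sum s f ▸ Finset.le_sup (f := fun i => val (f i)) hjs) hlt
    · obtain ⟨i, his, hti, hdom⟩ := ih hts
      refine ⟨i, Finset.mem_cons_of_mem his, hti, fun j hj hji => ?_⟩
      rcases Finset.mem_cons.mp hj with rfl | hjs
      · rwa [sum_eq_of_tangible_of_val_lt his hti hdom] at hlt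
      · exact hdom j hjs hji

end DR

open DR

section DominantPerm

variable {ι : Type*} [Fintype ι]

def IsDominantPerm (A : Matrix ι ι DR) (σ : Equiv.Perm ι) : Prop :=
  Tangible (∏ i, A (σ i) i) ∧ ∀ π, π ≠ σ → val (∏ i, A (π i) i) < val (∏ i, A (σ i) i)

theorem tangible_tperm_iff {k : ℕ} {A : Matrix (Fin k) (Fin k) DR} :
    Tangible (tperm A) ↔ ∃ σ, IsDominantPerm A σ := by
  simp [tperm, tangible_sum_iff, IsDominantPerm]

theorem prod_submatrix_perm (A : Matrix ι ι DR) (e e' π : Equiv.Perm ι) :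
    ∏ i, A.submatrix e e' (π i) i = ∏ i, A ((e * π * e'⁻¹) i) i := by
  rw [← Equiv.prod_comp e' fun i => A ((e * π * e'⁻¹) i) i]
  simp

theorem IsDominantPerm.submatrix {A : Matrix ι ι DR} {e e' π : Equiv.Perm ι}
    (h : IsDominantPerm A (e * π * e'⁻¹)) : IsDominantPerm (A.submatrix e e') π := by
  refine ⟨prod_submatrix_perm A e e' π ▸ h.1, fun ρ hρ => ?_⟩
  rw [prod_submatrix_perm, prod_submatrix_perm]
  exact h.2 _ fun h' => hρ (by simpa using h')

theorem exists_tangible_mul_apply_self [Nonempty ι] {A B : Matrix ι ι DR}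
    (hA : IsDominantPerm A 1) (hB : IsDominantPerm B 1) : ∃ j, Tangible ((A * B) j j) := by
  by_contra! hAB
  have hdiag : ∀ j, Tangible (A j j * B j j) := fun j =>
    tangible_mul_iff.mpr ⟨tangible_prod_iff.mp hA.1 j (Finset.mem_univ j),
      tangible_prod_iff.mp hB.1 j (Finset.mem_univ j)⟩
  have hghost : ∀ j, ∃ k, k ≠ j ∧ val (A j j * B j j) ≤ val (A j k * B k j) := by
    intro j
    have h := hAB j
    simp only [Matrix.mul_apply, tangible_sum_iff, not_exists, not_and, not_forall,
      not_lt] at h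
    obtain ⟨k, -, hkj, hle⟩ := h j (Finset.mem_univ j) (hdiag j)
    exact ⟨k, hkj, hle⟩
  choose f hf_ne hf_le using hghost
  obtain ⟨π, hπ, hπf⟩ := Function.exists_perm_ne_one_of_forall_not_isFixedPt hf_ne
  have hle : val (∏ j, A j j * B j j) ≤ val (∏ j, A j (π j) * B (π j) j) := by
    rw [val_prod, val_prod]
    refine Finset.sum_le_sum fun j _ => ?_
    rcases hπf j with h | h <;> rw [h]
    exact hf_le j
  have hlt : val (∏ j, A j (π j) * B (π j) j) < val (∏ j, A j j * B j j) := by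
    have hA' : ∏ j, A j (π j) = ∏ i, A (π⁻¹ i) i := by
      rw [← Equiv.prod_comp π fun i => A (π⁻¹ i) i]
      simp
    rw [Finset.prod_mul_distrib, Finset.prod_mul_distrib, hA']
    exact val_mul_lt_val_mul (by simpa using hA.2 π⁻¹ (inv_ne_one.mpr hπ))
      (by simpa using hB.2 π hπ)
  exact (hle.trans_lt hlt).false

end DominantPerm

/-- The product of two nonsingular matrices over `D(ℝ)` cannot lie in `M_n(G₀)`:
some entry of `A * B` is not a ghost. -/
theorem product_of_nonsingular_not_ghost (n : ℕ) (hn : 0 < n)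
    (A B : Matrix (Fin n) (Fin n) DR)
    (hA : Tangible (tperm A)) (hB : Tangible (tperm B)) :
    ∃ i j, ¬ IsGhost ((A * B) i j) := by
  have : Nonempty (Fin n) := ⟨⟨0, hn⟩⟩
  obtain ⟨σ, hσ⟩ := tangible_tperm_iff.mp hA
  obtain ⟨τ, hτ⟩ := tangible_tperm_iff.mp hB
  have hA' : IsDominantPerm (A.submatrix (σ * τ) τ) 1 :=
    IsDominantPerm.submatrix (by simpa [mul_assoc] using hσ)
  have hB' : IsDominantPerm (B.submatrix τ (1 : Equiv.Perm (Fin n))) 1 :=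
    IsDominantPerm.submatrix (by simpa using hτ)
  obtain ⟨j, hj⟩ := exists_tangible_mul_apply_self hA' hB'
  rw [← Matrix.submatrix_mul _ _ _ _ _ τ.bijective] at hj
  exact ⟨_, _, isGhost_iff_not_tangible.not_left.mpr hj⟩
end
end

section
/- Let A be an n×n matrix over D(ℝ) whose maximal number of tropically independent rows is m. Then there exist n−m tropically independent tangible vectors u₁, …, u_{n−m} ∈ D(ℝ)^(n) such that each uⱼ g-annihilates A on the left, i.e., the row vector uⱼ · A lies in G₀^(n). -/
noncomputable section

open DR

/-!
Take `m` independent rows `s`. For every row `k ∉ s` the rows `insert k s` are dependent, and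
since `s` is not, the relation must involve row `k` with a tangible coefficient. Padding its
coefficients with `-∞` gives a tangible vector `u_k` with `u_k A` ghost whose support lies in
`insert k s`. The `n - m` vectors `u_k` are independent: at position `k` only `u_k` is nonzero,
so any tangible combination has a tangible entry there.
-/

theorem DR.Tangible.mul {x y : DR} (hx : Tangible x) (hy : Tangible y) : Tangible (x * y) := by
  cases x with
  | bot => exact hx.elim
  | nb b r =>
    cases y with
    | bot => exact hy.elim
    | nb c s => cases b <;> cases c <;> first | exact hx.elim | exact hy.elim | trivial

theorem DR.Tangible.not_isGhost {x : DR} (hx : Tangible x) : ¬ IsGhost x := by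
  cases x with
  | bot => exact hx.elim
  | nb b r => cases b <;> simp_all [Tangible, IsGhost]

section Relations

variable {ι : Type*} {n : ℕ} (w : ι → Fin n → DR)

theorem tropDep_subtype_iff (s : Finset ι) :
    TropDep (fun i : s => w i) ↔ ∃ I ⊆ s, I.Nonempty ∧ ∃ α : ι → DR,
      (∀ i ∈ I, Tangible (α i)) ∧ ∀ j, IsGhost (∑ i ∈ I, α i * w i j) := by
  classical
  constructor
  · rintro ⟨I, hI, α, hα, hg⟩
    refine ⟨I.map (Function.Embedding.subtype _), fun i hi => ?_, hI.map,
      fun i => if h : i ∈ s then α ⟨i, h⟩ else 0, fun i hi => ?_, fun j => ?_⟩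
    · obtain ⟨i, -, rfl⟩ := Finset.mem_map.mp hi
      exact i.2
    · obtain ⟨i, hiI, rfl⟩ := Finset.mem_map.mp hi
      simpa using hα i hiI
    · simpa [Finset.sum_map] using hg j
  · rintro ⟨I, hIs, hI, α, hα, hg⟩
    refine ⟨I.subtype (· ∈ s), ?_, fun i => α i, fun i hi => hα i (by simpa using hi),
      fun j => ?_⟩
    · obtain ⟨i, hi⟩ := hI
      exact ⟨⟨i, hIs hi⟩, by simpa using hi⟩
    · rw [Finset.sum_subtype_of_mem (fun i => α i * w i j) hIs]
      exact hg j

theorem TropIndep.exists_relation_of_insert [Fintype ι] [DecidableEq ι] {s : Finset ι} {k : ι}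
    (hs : TropIndep (fun i : s => w i))
    (hk : TropDep (fun i : (insert k s : Finset ι) => w i)) :
    ∃ α : ι → DR, (∀ i, TangibleOrBot (α i)) ∧ Tangible (α k) ∧
      (∀ i ∉ insert k s, α i = 0) ∧ ∀ j, IsGhost (∑ i, α i * w i j) := by
  obtain ⟨I, hIs, hI, α, hα, hg⟩ := (tropDep_subtype_iff w _).mp hk
  have hkI : k ∈ I := by
    by_contra hkI
    refine hs ((tropDep_subtype_iff w s).mpr ⟨I, fun i hi => ?_, hI, α, hα, hg⟩)
    exact (Finset.mem_insert.mp (hIs hi)).resolve_left (ne_of_mem_of_not_mem hi hkI)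
  refine ⟨fun i => if i ∈ I then α i else 0, fun i => ?_, by simpa [hkI] using hα k hkI,
    fun i hi => if_neg fun hiI => hi (hIs hiI), fun j => ?_⟩
  · dsimp only [TangibleOrBot]
    split_ifs with hiI
    exacts [Or.inr (hα i hiI), Or.inl rfl]
  · simpa [ite_mul, Finset.sum_ite_mem] using hg j

end Relations

theorem tropIndep_of_tangible_diagonal {κ : Type*} [Fintype κ] {n : ℕ} (u : κ → Fin n → DR)
    (c : κ → Fin n) (hdiag : ∀ j, Tangible (u j (c j)))
    (hoff : ∀ j j', j ≠ j' → u j (c j') = 0) : TropIndep u := by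
  rintro ⟨J, ⟨j₀, hj₀⟩, β, hβ, hg⟩
  have hsum : ∑ j ∈ J, β j * u j (c j₀) = β j₀ * u j₀ (c j₀) :=
    Finset.sum_eq_single_of_mem j₀ hj₀ fun j _ hj => by rw [hoff j j₀ hj, mul_zero]
  exact ((hβ j₀ hj₀).mul (hdiag j₀)).not_isGhost (hsum ▸ hg (c j₀))

/-- If the maximal number of tropically independent rows of an `n × n` matrix `A`
is `m`, then its left g-annihilator contains `n - m` tropically independent
tangible vectors. -/
theorem annihilator_of_matrix_has_rank (n m : ℕ) (A : Matrix (Fin n) (Fin n) DR)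
    (h1 : ∃ s : Finset (Fin n), s.card = m ∧ TropIndep (fun i : s => A i.1))
    (h2 : ∀ s : Finset (Fin n), m < s.card → TropDep (fun i : s => A i.1)) :
    ∃ u : Fin (n - m) → Fin n → DR, (∀ j, TangibleVec (u j)) ∧ TropIndep u ∧
      ∀ j c, IsGhost (∑ i, u j i * A i c) := by
  obtain ⟨s, hcard, hs⟩ := h1
  have hcompl : sᶜ.card = n - m := by rw [Finset.card_compl, hcard, Fintype.card_fin]
  set c := sᶜ.orderEmbOfFin hcompl
  have hc : ∀ j, c j ∉ s := fun j => Finset.mem_compl.mp (sᶜ.orderEmbOfFin_mem hcompl j)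
  have hrel := fun j => hs.exists_relation_of_insert A
    (h2 _ (by rw [Finset.card_insert_of_notMem (hc j)]; omega))
  choose u hu_tangible hu_diag hu_support hu_ghost using hrel
  refine ⟨u, hu_tangible, tropIndep_of_tangible_diagonal u c hu_diag fun j j' hj => ?_, hu_ghost⟩
  exact hu_support j _ (by simp [c.injective.ne hj.symm, hc j'])
end
end

section
/- Let V be a D(ℝ)-submodule of D(ℝ)^(n). Every critical vector v ∈ V is almost tangible; that is, if v is critical, then for every w ∈ V, v ⊨ w implies w = v. -/
noncomputable section

open DR

/-- Projective equivalence: `v = α • w` for a tangible scalar `α`. -/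
def ProjEquiv {n : ℕ} (v w : Fin n → DR) : Prop := ∃ α : DR, Tangible α ∧ v = α • w

/-- `v` is a critical vector of `V`: one cannot write `v ⊨ v₁ + v₂` with
`v₁, v₂ ∈ V` both outside the projective class of `v`. -/
def Critical {n : ℕ} (V : Set (Fin n → DR)) (v : Fin n → DR) : Prop :=
  ¬ ∃ v₁ ∈ V, ∃ v₂ ∈ V, ¬ ProjEquiv v₁ v ∧ ¬ ProjEquiv v₂ v ∧ GhostSurpVec v (v₁ + v₂)

/-!
If `v ≠ 0` then `0 ∉ [v]`, because tangible scalars are units. Criticality applied to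
`v ⊨ w + 0` then puts `w` in `[v]`, say `w = α v`, and applied to `v ⊨ 0 + 0` shows that `v`
is not ghost. At a tangible entry of `v`, `v_j = α v_j + u_j` with `u_j` ghost forces
`α v_j = v_j`, hence `α = 𝟙` and `w = v`. If `v = 0`, then `w + u = 0` forces `w = 0`.
-/

namespace DR

theorem add_eq_zero_iff {x y : DR} : x + y = 0 ↔ x = 0 ∧ y = 0 := by
  refine ⟨fun h => ?_, fun ⟨hx, hy⟩ => by rw [hx, hy, add_zero]⟩
  change add x y = bot at h
  cases x <;> cases y <;> simp only [add] at h
  · exact ⟨rfl, rfl⟩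
  all_goals first | cases h | split_ifs at h

theorem tangible_of_not_isGhost {x : DR} (hx : ¬ IsGhost x) : Tangible x := by
  rcases x with _ | ⟨_ | _, r⟩ <;> simp_all [IsGhost, Tangible]

theorem isUnit_of_tangible {α : DR} (hα : Tangible α) : IsUnit α := by
  rcases α with _ | ⟨_ | _, a⟩
  · exact hα.elim
  · refine IsUnit.of_mul_eq_one (nb false (-a)) ?_
    show nb (false || false) (a + -a) = nb false 0
    rw [Bool.or_false, add_neg_cancel]
  · exact hα.elim

theorem eq_of_add_ghost_eq_tangible {x y c : DR} (hx : Tangible x) (hc : IsGhost c)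
    (h : y + c = x) : y = x := by
  rcases x with _ | ⟨_ | _, r⟩
  · exact hx.elim
  · change add y c = nb false r at h
    rcases c with _ | ⟨_ | _, s⟩
    · rwa [add_bot] at h
    · exact absurd hc Bool.false_ne_true
    · rcases y with _ | ⟨b, t⟩ <;> simp only [add] at h
      · exact absurd h (by simp)
      · split_ifs at h <;> simp_all
  · exact hx.elim

theorem eq_one_of_mul_eq_self {α x : DR} (hx : Tangible x) (h : α * x = x) : α = 1 := by
  rcases x with _ | ⟨_ | _, r⟩
  · exact hx.elim
  · rcases α with _ | ⟨b, a⟩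
    · exact absurd h (by simp [HMul.hMul, Mul.mul, mul])
    · change nb (b || false) (a + r) = nb false r at h
      simp only [Bool.or_false, nb.injEq, add_eq_right] at h
      rw [h.1, h.2]
      rfl
  · exact hx.elim

end DR

section

variable {n : ℕ}

theorem GhostSurpVec.eq_zero {w : Fin n → DR} (h : GhostSurpVec 0 w) : w = 0 := by
  obtain ⟨u, -, hu⟩ := h
  funext j
  exact (DR.add_eq_zero_iff.1 (congrFun hu j).symm).1

theorem not_projEquiv_zero {v : Fin n → DR} (hv : v ≠ 0) : ¬ ProjEquiv 0 v := by
  rintro ⟨α, hα, h0⟩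
  exact hv (((DR.isUnit_of_tangible hα).smul_eq_zero).1 h0.symm)

theorem GhostSurpVec.eq_of_projEquiv {v w : Fin n → DR} (h : GhostSurpVec v w)
    (hw : ProjEquiv w v) (hv : ¬ GhostVec v) : w = v := by
  obtain ⟨u, hu, hvw⟩ := h
  obtain ⟨α, -, rfl⟩ := hw
  obtain ⟨j, hj⟩ := not_forall.1 hv
  have htan := DR.tangible_of_not_isGhost hj
  have hαv : α * v j = v j := DR.eq_of_add_ghost_eq_tangible htan (hu j) (congrFun hvw j).symm
  have hα : α = 1 := DR.eq_one_of_mul_eq_self htan hαv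
  rw [hα, one_smul]

namespace Critical

variable {V : Set (Fin n → DR)} {v : Fin n → DR}

theorem not_ghostVec (hc : Critical V v) (h0 : 0 ∈ V) (hv : v ≠ 0) : ¬ GhostVec v :=
  fun hg => hc ⟨0, h0, 0, h0, not_projEquiv_zero hv, not_projEquiv_zero hv, v, hg, by simp⟩

theorem projEquiv_of_ghostSurpVec (hc : Critical V v) (h0 : 0 ∈ V) (hv : v ≠ 0)
    {w : Fin n → DR} (hw : w ∈ V) (h : GhostSurpVec v w) : ProjEquiv w v := by
  by_contra hwv
  exact hc ⟨w, hw, 0, h0, hwv, not_projEquiv_zero hv, by rwa [add_zero]⟩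

end Critical

end

theorem critical_is_almost_tangible_general (n : ℕ) (V : Submodule DR (Fin n → DR))
    (v : Fin n → DR) (hc : Critical (V : Set (Fin n → DR)) v) :
    ∀ w ∈ V, GhostSurpVec v w → w = v := by
  intro w hw hvw
  rcases eq_or_ne v 0 with rfl | hv
  · exact hvw.eq_zero
  · exact hvw.eq_of_projEquiv (hc.projEquiv_of_ghostSurpVec V.zero_mem hv hw hvw)
      (hc.not_ghostVec V.zero_mem hv)

/-- Every critical vector of a subspace `V` of `D(ℝ)^(n)` is almost tangible. -/
theorem critical_is_almost_tangible (n : ℕ) (V : Submodule DR (Fin n → DR))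
    (v : Fin n → DR) (hv : v ∈ V) (hc : Critical (V : Set (Fin n → DR)) v) :
    ∀ w ∈ V, GhostSurpVec v w → w = v :=
  critical_is_almost_tangible_general n V v hc
end
end
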